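/- arXiv:2202.06832 — 3 statements merged into one kernel-verified Lean document; each statement's English description precedes it below -/
import Mathlib

section
/- Let ρ be a density matrix and let {F_f^α}_{α ∈ A} and {F_{f'}^α}_{α ∈ A} be POVMs acting on disjoint tensor factors, such that for all α ∈ A, Tr((F_f^α ⊗ F_{f'}^α) ρ) ≥ (1−δ) Tr(F_f^α ρ) and Tr((F_f^α ⊗ F_{f'}^α) ρ) ≥ (1−δ) Tr(F_{f'}^α ρ). Then for all α, |Tr(F_f^α ρ) − Tr(F_{f'}^α ρ)| ≤ δ. -/
open scoped Kronecker ComplexOrder MatrixOrder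
open Matrix

/-!
Write `p`, `q` for the outcome probabilities of `α` under the two POVMs and `r` for the joint one.
Since POVM elements lie below `1` in the Loewner order, so do their Kronecker products with `1`,
and `X ↦ Re Tr (X ρ)` is monotone; hence `r ≤ q` and `p ≤ 1`, so
`p - q ≤ p - r ≤ p - (1 - δ) p = δ p ≤ δ`. The other inequality is symmetric.
-/

namespace Matrix

variable {𝕜 m n : Type*} [RCLike 𝕜]

lemma PosSemidef.trace_mul_nonneg [Fintype n] {A B : Matrix n n 𝕜}
    (hA : A.PosSemidef) (hB : B.PosSemidef) : 0 ≤ (A * B).trace := by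
  classical
  obtain ⟨X, rfl⟩ := CStarAlgebra.nonneg_iff_eq_star_mul_self.mp hB.nonneg
  rw [star_eq_conjTranspose, ← mul_assoc, trace_mul_comm, ← mul_assoc]
  exact (hA.mul_mul_conjTranspose_same X).trace_nonneg

lemma trace_mul_le_trace_mul [Fintype n] {A B ρ : Matrix n n 𝕜}
    (hAB : A ≤ B) (hρ : ρ.PosSemidef) : (A * ρ).trace ≤ (B * ρ).trace := by
  rw [← sub_nonneg, ← trace_sub, ← sub_mul]
  exact (le_iff.mp hAB).trace_mul_nonneg hρ

lemma kronecker_le_kronecker_left [Finite m] [Finite n] {A : Matrix m m 𝕜}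
    {B C : Matrix n n 𝕜} (hA : 0 ≤ A) (hBC : B ≤ C) : A ⊗ₖ B ≤ A ⊗ₖ C := by
  have hsub : A ⊗ₖ C - A ⊗ₖ B = A ⊗ₖ (C - B) := by ext; simp [mul_sub]
  rw [le_iff, hsub]
  exact hA.posSemidef.kronecker (le_iff.mp hBC)

lemma kronecker_le_kronecker_right [Finite m] [Finite n] {A B : Matrix m m 𝕜}
    {C : Matrix n n 𝕜} (hAB : A ≤ B) (hC : 0 ≤ C) : A ⊗ₖ C ≤ B ⊗ₖ C := by
  have hsub : B ⊗ₖ C - A ⊗ₖ C = (B - A) ⊗ₖ C := by ext; simp [sub_mul]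
  rw [le_iff, hsub]
  exact (le_iff.mp hAB).kronecker hC.posSemidef

end Matrix

lemma sub_le_of_one_sub_mul_le {p q r δ : ℝ} (hrq : r ≤ q) (hrec : (1 - δ) * p ≤ r) (hp : p ≤ 1)
    (hδ : 0 ≤ δ) : p - q ≤ δ := by
  nlinarith [mul_nonneg hδ (sub_nonneg.mpr hp)]

theorem mutual_records_close_probabilities_general
    {m n A : Type*} [Fintype m] [Fintype n] [Fintype A]
    [DecidableEq m] [DecidableEq n]
    (ρ : Matrix (m × n) (m × n) ℂ) (hρ : ρ.PosSemidef) (hρtr : ρ.trace = 1)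
    (F : A → Matrix m m ℂ) (F' : A → Matrix n n ℂ)
    (hF : ∀ α, (F α).PosSemidef) (hFsum : ∑ α, F α = 1)
    (hF' : ∀ α, (F' α).PosSemidef) (hF'sum : ∑ α, F' α = 1)
    (δ : ℝ) (hδ0 : 0 ≤ δ)
    (hrec : ∀ α, ((F α ⊗ₖ F' α) * ρ).trace.re
        ≥ (1 - δ) * ((F α ⊗ₖ (1 : Matrix n n ℂ)) * ρ).trace.re)
    (hrec' : ∀ α, ((F α ⊗ₖ F' α) * ρ).trace.re
        ≥ (1 - δ) * (((1 : Matrix m m ℂ) ⊗ₖ F' α) * ρ).trace.re) :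
    ∀ α, |((F α ⊗ₖ (1 : Matrix n n ℂ)) * ρ).trace.re
          - (((1 : Matrix m m ℂ) ⊗ₖ F' α) * ρ).trace.re| ≤ δ := by
  intro α
  have hFle : F α ≤ 1 :=
    hFsum ▸ Finset.single_le_sum (fun β _ ↦ (hF β).nonneg) (Finset.mem_univ α)
  have hF'le : F' α ≤ 1 :=
    hF'sum ▸ Finset.single_le_sum (fun β _ ↦ (hF' β).nonneg) (Finset.mem_univ α)
  have probability_le {X : Matrix (m × n) (m × n) ℂ} {Y} (hXY : X ≤ Y) :
      (X * ρ).trace.re ≤ (Y * ρ).trace.re :=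
    (Complex.le_def.mp (trace_mul_le_trace_mul hXY hρ)).1
  have hρ1 : ((1 : Matrix (m × n) (m × n) ℂ) * ρ).trace.re = 1 := by simp [hρtr]
  refine abs_sub_le_iff.mpr
    ⟨sub_le_of_one_sub_mul_le ?_ (hrec α) ?_ hδ0, sub_le_of_one_sub_mul_le ?_ (hrec' α) ?_ hδ0⟩
  · exact probability_le (kronecker_le_kronecker_right hFle (hF' α).nonneg)
  · rw [← hρ1, ← one_kronecker_one]
    exact probability_le (kronecker_le_kronecker_right hFle zero_le_one)
  · exact probability_le (kronecker_le_kronecker_left (hF α).nonneg hF'le)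
  · rw [← hρ1, ← one_kronecker_one]
    exact probability_le (kronecker_le_kronecker_left zero_le_one hF'le)

/-- if the POVMs {F_f^α} and {F_{f'}^α} on disjoint tensor factors
δ-approximately record each other on the density matrix ρ, then their outcome
probabilities on ρ differ by at most δ. -/
theorem mutual_records_close_probabilities
    {m n A : Type*} [Fintype m] [Fintype n] [Fintype A]
    [DecidableEq m] [DecidableEq n]
    (ρ : Matrix (m × n) (m × n) ℂ) (hρ : ρ.PosSemidef) (hρtr : ρ.trace = 1)
    (F : A → Matrix m m ℂ) (F' : A → Matrix n n ℂ)
    (hF : ∀ α, (F α).PosSemidef) (hFsum : ∑ α, F α = 1)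
    (hF' : ∀ α, (F' α).PosSemidef) (hF'sum : ∑ α, F' α = 1)
    (δ : ℝ) (hδ0 : 0 ≤ δ) (hδ1 : δ ≤ 1)
    (hrec : ∀ α, ((F α ⊗ₖ F' α) * ρ).trace.re
        ≥ (1 - δ) * ((F α ⊗ₖ (1 : Matrix n n ℂ)) * ρ).trace.re)
    (hrec' : ∀ α, ((F α ⊗ₖ F' α) * ρ).trace.re
        ≥ (1 - δ) * (((1 : Matrix m m ℂ) ⊗ₖ F' α) * ρ).trace.re) :
    ∀ α, |((F α ⊗ₖ (1 : Matrix n n ℂ)) * ρ).trace.re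
          - (((1 : Matrix m m ℂ) ⊗ₖ F' α) * ρ).trace.re| ≤ δ :=
  mutual_records_close_probabilities_general ρ hρ hρtr F F' hF hFsum hF' hF'sum δ hδ0 hrec hrec'
end

section
/- Let ψ be a unit vector in H = ⊗_{i=1}^N H_i, let F and G be partitions of [N] that do not pair-cover each other, and let {F_f}_{f∈F}, {G_g}_{g∈G} be families of projective measurements, F_f supported on the factors in f and G_g on the factors in g, that are perfectly redundantly recorded: for all α and all f, f' ∈ F, F_f^α ψ = F_{f'}^α ψ, and for all μ and all g, g' ∈ G, G_g^μ ψ = G_{g'}^μ ψ. Then for all f ∈ F, g ∈ G, all α, μ: F_f^α G_g^μ ψ = G_g^μ F_f^α ψ, i.e., the projectors commute on ψ. -/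
open Matrix
open scoped Classical

/-- An operator on the many-body Hilbert space ⊗_{i=1}^N H_i (with H_i = ℂ^{d i})
acts only on the sites in `f`: it is A_f ⊗ I_{rest} for some operator A_f on the
factors in `f`. -/
def SupportedOn {N : ℕ} (d : Fin N → ℕ) (f : Finset (Fin N))
    (M : Matrix (∀ i, Fin (d i)) (∀ i, Fin (d i)) ℂ) : Prop :=
  ∃ A : (∀ i : f, Fin (d i.1)) → (∀ i : f, Fin (d i.1)) → ℂ,
    ∀ x y, M x y =
      if ∀ i ∉ f, x i = y i then A (fun i => x i.1) (fun i => y i.1) else 0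

lemma sum_supported {N : ℕ} (d : Fin N → ℕ) (f g : Finset (Fin N)) (hfg : Disjoint f g)
    (A : (∀ i : f, Fin (d i.1)) → (∀ i : f, Fin (d i.1)) → ℂ)
    (B : (∀ i : g, Fin (d i.1)) → (∀ i : g, Fin (d i.1)) → ℂ)
    (x y : ∀ i, Fin (d i)) :
    (∑ z : ∀ i, Fin (d i),
      (if ∀ i ∉ f, x i = z i then A (fun i => x i.1) (fun i => z i.1) else 0) *
      (if ∀ i ∉ g, z i = y i then B (fun i => z i.1) (fun i => y i.1) else 0)) =
    if ∀ i, i ∉ f → i ∉ g → x i = y i then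
      A (fun i => x i.1) (fun i => y i.1) * B (fun i => x i.1) (fun i => y i.1) else 0 := by
  by_cases h : ∀ i, i ∉ f → i ∉ g → x i = y i
  · rw [if_pos h]
    set z₀ : ∀ i, Fin (d i) := fun i => if i ∈ f then y i else x i with hz₀
    rw [Finset.sum_eq_single z₀]
    · have h1 : ∀ i ∉ f, x i = z₀ i := by
        intro i hi; simp [hz₀, hi]
      have h2 : ∀ i ∉ g, z₀ i = y i := by
        intro i hi
        by_cases hif : i ∈ f
        · simp [hz₀, hif]
        · simp [hz₀, hif, h i hif hi]
      rw [if_pos h1, if_pos h2]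
      congr 1
      · congr 1
        funext i
        have : (i : Fin N) ∈ f := i.2
        simp [hz₀, this]
      · congr 1
        funext i
        have hig : (i : Fin N) ∈ g := i.2
        have hif : (i : Fin N) ∉ f := fun hc => Finset.disjoint_left.mp hfg hc hig
        simp [hz₀, hif]
    · intro z _ hz
      by_cases h1 : ∀ i ∉ f, x i = z i
      · by_cases h2 : ∀ i ∉ g, z i = y i
        · exfalso
          apply hz
          funext i
          by_cases hif : i ∈ f
          · have hig : i ∉ g := fun hc => Finset.disjoint_left.mp hfg hif hc
            simp [hz₀, hif, h2 i hig]
          · simp [hz₀, hif, ← h1 i hif]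
        · rw [if_neg h2, mul_zero]
      · rw [if_neg h1, zero_mul]
    · intro hc; exact absurd (Finset.mem_univ z₀) hc
  · rw [if_neg h]
    apply Finset.sum_eq_zero
    intro z _
    by_cases h1 : ∀ i ∉ f, x i = z i
    · by_cases h2 : ∀ i ∉ g, z i = y i
      · exact absurd (fun i hif hig => (h1 i hif).trans (h2 i hig)) h
      · rw [if_neg h2, mul_zero]
    · rw [if_neg h1, zero_mul]

lemma commute_of_disjoint_support {N : ℕ} (d : Fin N → ℕ) {f g : Finset (Fin N)}
    {M M' : Matrix (∀ i, Fin (d i)) (∀ i, Fin (d i)) ℂ}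
    (hM : SupportedOn d f M) (hM' : SupportedOn d g M') (hfg : Disjoint f g) :
    M * M' = M' * M := by
  obtain ⟨A, hA⟩ := hM
  obtain ⟨B, hB⟩ := hM'
  ext x y
  rw [Matrix.mul_apply, Matrix.mul_apply]
  simp only [hA, hB]
  rw [sum_supported d f g hfg A B x y]
  have : (∑ z : ∀ i, Fin (d i),
      (if ∀ i ∉ g, x i = z i then B (fun i => x i.1) (fun i => z i.1) else 0) *
      (if ∀ i ∉ f, z i = y i then A (fun i => z i.1) (fun i => y i.1) else 0)) =
      if ∀ i, i ∉ g → i ∉ f → x i = y i then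
        B (fun i => x i.1) (fun i => y i.1) * A (fun i => x i.1) (fun i => y i.1) else 0 :=
    sum_supported d g f hfg.symm B A x y
  rw [this]
  by_cases h : ∀ i, i ∉ f → i ∉ g → x i = y i
  · rw [if_pos h, if_pos (fun i hig hif => h i hif hig), mul_comm]
  · rw [if_neg h, if_neg (fun hc => h (fun i hif hig => hc i hig hif))]

/-- perfectly redundantly recorded projective measurements with respect to
two non pair-covering partitions F, G of the sites commute on the state ψ. -/
theorem redundant_records_commute_on_state
    {N : ℕ} (d : Fin N → ℕ) {A B : Type*} [Fintype A] [Fintype B]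
    (ψ : (∀ i, Fin (d i)) → ℂ) (hψ : star ψ ⬝ᵥ ψ = 1)
    (F G : Finset (Finset (Fin N)))
    (hFpart : ∀ i : Fin N, ∃! f, f ∈ F ∧ i ∈ f)
    (hGpart : ∀ i : Fin N, ∃! g, g ∈ G ∧ i ∈ g)
    (FM : Finset (Fin N) → A → Matrix (∀ i, Fin (d i)) (∀ i, Fin (d i)) ℂ)
    (GM : Finset (Fin N) → B → Matrix (∀ i, Fin (d i)) (∀ i, Fin (d i)) ℂ)
    (hFMherm : ∀ f ∈ F, ∀ α, (FM f α).IsHermitian)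
    (hFMidem : ∀ f ∈ F, ∀ α, FM f α * FM f α = FM f α)
    (hFMorth : ∀ f ∈ F, ∀ α α', α ≠ α' → FM f α * FM f α' = 0)
    (hFMsum : ∀ f ∈ F, ∑ α, FM f α = 1)
    (hFMsupp : ∀ f ∈ F, ∀ α, SupportedOn d f (FM f α))
    (hGMherm : ∀ g ∈ G, ∀ μ, (GM g μ).IsHermitian)
    (hGMidem : ∀ g ∈ G, ∀ μ, GM g μ * GM g μ = GM g μ)
    (hGMorth : ∀ g ∈ G, ∀ μ μ', μ ≠ μ' → GM g μ * GM g μ' = 0)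
    (hGMsum : ∀ g ∈ G, ∑ μ, GM g μ = 1)
    (hGMsupp : ∀ g ∈ G, ∀ μ, SupportedOn d g (GM g μ))
    (hnpcF : ∀ f ∈ F, ∀ f' ∈ F, ∃ g ∈ G, Disjoint f g ∧ Disjoint f' g)
    (hnpcG : ∀ g ∈ G, ∀ g' ∈ G, ∃ f ∈ F, Disjoint g f ∧ Disjoint g' f)
    (hredF : ∀ f ∈ F, ∀ f' ∈ F, ∀ α, FM f α *ᵥ ψ = FM f' α *ᵥ ψ)
    (hredG : ∀ g ∈ G, ∀ g' ∈ G, ∀ μ, GM g μ *ᵥ ψ = GM g' μ *ᵥ ψ) :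
    ∀ f ∈ F, ∀ g ∈ G, ∀ α μ,
      FM f α *ᵥ (GM g μ *ᵥ ψ) = GM g μ *ᵥ (FM f α *ᵥ ψ) := by
  intro f hf g hg α μ
  obtain ⟨g', hg', hfg', -⟩ := hnpcF f hf f hf
  obtain ⟨f', hf', hgf', hg'f'⟩ := hnpcG g hg g' hg'
  have c1 : FM f α * GM g' μ = GM g' μ * FM f α :=
    commute_of_disjoint_support d (hFMsupp f hf α) (hGMsupp g' hg' μ) hfg'
  have c2 : FM f' α * GM g' μ = GM g' μ * FM f' α :=
    commute_of_disjoint_support d (hFMsupp f' hf' α) (hGMsupp g' hg' μ) hg'f'.symm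
  have c3 : FM f' α * GM g μ = GM g μ * FM f' α :=
    commute_of_disjoint_support d (hFMsupp f' hf' α) (hGMsupp g hg μ) hgf'.symm
  calc FM f α *ᵥ (GM g μ *ᵥ ψ)
      = FM f α *ᵥ (GM g' μ *ᵥ ψ) := by rw [hredG g hg g' hg' μ]
    _ = GM g' μ *ᵥ (FM f α *ᵥ ψ) := by
        rw [Matrix.mulVec_mulVec, Matrix.mulVec_mulVec, c1]
    _ = GM g' μ *ᵥ (FM f' α *ᵥ ψ) := by rw [hredF f hf f' hf' α]
    _ = FM f' α *ᵥ (GM g' μ *ᵥ ψ) := by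
        rw [Matrix.mulVec_mulVec, Matrix.mulVec_mulVec, c2]
    _ = FM f' α *ᵥ (GM g μ *ᵥ ψ) := by rw [hredG g' hg' g hg μ]
    _ = GM g μ *ᵥ (FM f' α *ᵥ ψ) := by
        rw [Matrix.mulVec_mulVec, Matrix.mulVec_mulVec, c3]
    _ = GM g μ *ᵥ (FM f α *ᵥ ψ) := by rw [hredF f' hf' f hf α]
end

section
/- Diamond-norm-type bound from Choi state distance with dimension factor: for two channels Φ, Ψ from D(H_R) to D(H_S) with normalized Choi states ρ^Φ, ρ^Ψ, and for every density matrix σ on H_R, ‖Φ(σ) − Ψ(σ)‖₁ ≤ d_R · ‖ρ^Φ − ρ^Ψ‖₁, where d_R = dim H_R. -/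
open Matrix
open scoped Kronecker ComplexOrder

/-- Normalized Choi state of a linear map Φ on matrices:
ρ^Φ = (id_{R'} ⊗ Φ)(|ψ⟩⟨ψ|) with |ψ⟩ = d^{-1/2} Σ_i |ii⟩. -/
noncomputable def choiState {R S : Type*} [Fintype R] [DecidableEq R] [Fintype S]
    (Φ : Matrix R R ℂ →ₗ[ℂ] Matrix S S ℂ) : Matrix (R × S) (R × S) ℂ :=
  Matrix.of fun p q =>
    ((Fintype.card R : ℂ))⁻¹ * Φ (Matrix.single p.1 q.1 1) p.2 q.2

/-- Trace norm of a Hermitian matrix: the sum of the absolute values of its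
eigenvalues. -/
noncomputable def traceNormH {n : Type*} [Fintype n] [DecidableEq n]
    {M : Matrix n n ℂ} (hM : M.IsHermitian) : ℝ :=
  ∑ i, |hM.eigenvalues i|

/-! For the Hermitian matrix `Δ = Φ σ - Ψ σ` with sign `W = sign Δ`, a contraction
(`-1 ≤ W ≤ 1`), the trace norm is `‖Δ‖₁ = tr (Δ W)`. The Choi state reproduces the channel through
`tr (Φ σ W) = d_R tr (ρ^Φ (σᵀ ⊗ W))`, and `σᵀ ⊗ W` is again a contraction because `0 ≤ σ ≤ 1`.
Hölder's inequality `re tr (M B) ≤ ‖M‖₁` for Hermitian `M` and contractions `B` then bounds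
`‖Δ‖₁ = d_R re tr ((ρ^Φ - ρ^Ψ) (σᵀ ⊗ W))` by `d_R ‖ρ^Φ - ρ^Ψ‖₁`. -/

lemma SignType.abs_coe_le_one (s : SignType) : |(s : ℝ)| ≤ 1 := by
  cases s <;> norm_num

namespace Matrix

open Unitary

variable {𝕜 : Type*} [RCLike 𝕜]

lemma re_apply_self_le_one_of_posSemidef_one_sub {n : Type*} [DecidableEq n]
    {C : Matrix n n 𝕜} (h : (1 - C).PosSemidef) (i : n) : RCLike.re (C i i) ≤ 1 := by
  have h₀ := h.diag_nonneg (i := i)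
  rw [sub_apply, one_apply_eq, sub_nonneg, RCLike.le_iff_re_im] at h₀
  simpa using h₀.1

lemma abs_re_apply_self_le_one_of_posSemidef {n : Type*} [DecidableEq n]
    {C : Matrix n n 𝕜} (h₁ : (1 - C).PosSemidef) (h₂ : (1 + C).PosSemidef) (i : n) :
    |RCLike.re (C i i)| ≤ 1 := by
  have := re_apply_self_le_one_of_posSemidef_one_sub (C := -C) (by rwa [sub_neg_eq_add]) i
  rw [abs_le]
  constructor
  · simpa [neg_le] using this
  · exact re_apply_self_le_one_of_posSemidef_one_sub h₁ i

lemma kronecker_neg {α l m n p : Type*} [Ring α] (A : Matrix l m α) (B : Matrix n p α) :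
    A ⊗ₖ (-B) = -(A ⊗ₖ B) := by
  ext; simp

variable {m n : Type*} [Fintype m] [Fintype n] [DecidableEq m] [DecidableEq n]

lemma trace_conjStarAlgAut (U : unitary (Matrix n n 𝕜)) (X : Matrix n n 𝕜) :
    (conjStarAlgAut 𝕜 _ U X).trace = X.trace := by
  rw [conjStarAlgAut_apply, trace_mul_cycle, coe_star_mul_self, one_mul]

lemma PosSemidef.conjStarAlgAut {X : Matrix n n 𝕜} (hX : X.PosSemidef)
    (U : unitary (Matrix n n 𝕜)) : (conjStarAlgAut 𝕜 _ U X).PosSemidef := by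
  simpa [star_eq_conjTranspose] using hX.mul_mul_conjTranspose_same (U : Matrix n n 𝕜)

lemma posSemidef_one_sub_kronecker {A : Matrix m m 𝕜} {B : Matrix n n 𝕜} (hA : A.PosSemidef)
    (hA₁ : (1 - A).PosSemidef) (hB₁ : (1 - B).PosSemidef) : (1 - A ⊗ₖ B).PosSemidef := by
  have : (1 - A) ⊗ₖ (1 : Matrix n n 𝕜) + A ⊗ₖ (1 - B) = 1 - A ⊗ₖ B := by
    rw [eq_sub_iff_add_eq, add_assoc, ← kronecker_add, sub_add_cancel, ← add_kronecker,
      sub_add_cancel, one_kronecker_one]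
  rw [← this]
  exact (hA₁.kronecker .one).add (hA.kronecker hB₁)

namespace IsHermitian

variable {A : Matrix n n 𝕜}

lemma cfc_id (hA : A.IsHermitian) : hA.cfc id = A := hA.spectral_theorem.symm

lemma cfc_mul (hA : A.IsHermitian) (f g : ℝ → ℝ) : hA.cfc f * hA.cfc g = hA.cfc (f * g) := by
  simp only [IsHermitian.cfc, ← map_mul, diagonal_mul_diagonal]
  congr; ext; simp

lemma one_sub_cfc (hA : A.IsHermitian) (f : ℝ → ℝ) : 1 - hA.cfc f = hA.cfc (1 - f) := by
  rw [IsHermitian.cfc, IsHermitian.cfc, ← map_one (conjStarAlgAut 𝕜 _ hA.eigenvectorUnitary),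
    ← map_sub, ← diagonal_one, diagonal_sub]
  congr; ext; simp

lemma one_add_cfc (hA : A.IsHermitian) (f : ℝ → ℝ) : 1 + hA.cfc f = hA.cfc (1 + f) := by
  rw [IsHermitian.cfc, IsHermitian.cfc, ← map_one (conjStarAlgAut 𝕜 _ hA.eigenvectorUnitary),
    ← map_add, ← diagonal_one, diagonal_add]
  congr; ext; simp

lemma trace_cfc (hA : A.IsHermitian) (f : ℝ → ℝ) :
    (hA.cfc f).trace = ∑ i, (f (hA.eigenvalues i) : 𝕜) := by
  rw [IsHermitian.cfc, trace_conjStarAlgAut, trace_diagonal]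
  rfl

lemma posSemidef_cfc (hA : A.IsHermitian) {f : ℝ → ℝ} (hf : ∀ i, 0 ≤ f (hA.eigenvalues i)) :
    (hA.cfc f).PosSemidef := by
  refine PosSemidef.conjStarAlgAut ?_ _
  simpa using hf

lemma trace_mul_eq_sum_eigenvalues_mul (hA : A.IsHermitian) (B : Matrix n n 𝕜) :
    (A * B).trace = ∑ i, hA.eigenvalues i *
      conjStarAlgAut 𝕜 _ (star hA.eigenvectorUnitary) B i i := by
  rw [← trace_conjStarAlgAut (star hA.eigenvectorUnitary), map_mul,
    conjStarAlgAut_star_eigenvectorUnitary]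
  simp [trace, diagonal_mul]

lemma re_trace_mul_le_sum_abs_eigenvalues (hA : A.IsHermitian) {B : Matrix n n 𝕜}
    (h₁ : (1 - B).PosSemidef) (h₂ : (1 + B).PosSemidef) :
    RCLike.re (A * B).trace ≤ ∑ i, |hA.eigenvalues i| := by
  set C := conjStarAlgAut 𝕜 _ (star hA.eigenvectorUnitary) B
  have hC₁ : (1 - C).PosSemidef := by
    simpa only [map_sub, map_one] using h₁.conjStarAlgAut (star hA.eigenvectorUnitary)
  have hC₂ : (1 + C).PosSemidef := by
    simpa only [map_add, map_one] using h₂.conjStarAlgAut (star hA.eigenvectorUnitary)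
  rw [hA.trace_mul_eq_sum_eigenvalues_mul, map_sum]
  refine Finset.sum_le_sum fun i _ => ?_
  rw [RCLike.re_ofReal_mul]
  calc hA.eigenvalues i * RCLike.re (C i i) ≤ |hA.eigenvalues i| * |RCLike.re (C i i)| := by
        rw [← abs_mul]; exact le_abs_self _
    _ ≤ |hA.eigenvalues i| :=
        mul_le_of_le_one_right (abs_nonneg _) (abs_re_apply_self_le_one_of_posSemidef hC₁ hC₂ i)

lemma trace_mul_cfc_sign (hA : A.IsHermitian) :
    (A * hA.cfc (fun x => (SignType.sign x : ℝ))).trace =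
      ∑ i, ((|hA.eigenvalues i| : ℝ) : 𝕜) := by
  conv_lhs => arg 1; arg 1; rw [← hA.cfc_id]
  rw [hA.cfc_mul, hA.trace_cfc]
  simp

lemma posSemidef_one_sub_cfc_sign (hA : A.IsHermitian) :
    (1 - hA.cfc (fun x => (SignType.sign x : ℝ))).PosSemidef := by
  rw [hA.one_sub_cfc]
  refine hA.posSemidef_cfc fun i => ?_
  have := abs_le.1 (SignType.abs_coe_le_one (SignType.sign (hA.eigenvalues i)))
  simp only [Pi.sub_apply, Pi.one_apply]
  linarith

lemma posSemidef_one_add_cfc_sign (hA : A.IsHermitian) :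
    (1 + hA.cfc (fun x => (SignType.sign x : ℝ))).PosSemidef := by
  rw [hA.one_add_cfc]
  refine hA.posSemidef_cfc fun i => ?_
  have := abs_le.1 (SignType.abs_coe_le_one (SignType.sign (hA.eigenvalues i)))
  simp only [Pi.add_apply, Pi.one_apply]
  linarith

end IsHermitian

lemma PosSemidef.one_sub_of_trace_le_one {A : Matrix n n 𝕜} (hA : A.PosSemidef)
    (htr : A.trace ≤ 1) : (1 - A).PosSemidef := by
  have hsum : ∑ i, hA.1.eigenvalues i ≤ 1 := by
    rw [hA.1.trace_eq_sum_eigenvalues, RCLike.le_iff_re_im] at htr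
    simpa using htr.1
  have hle (i : n) : hA.1.eigenvalues i ≤ 1 :=
    (Finset.single_le_sum (fun j _ => hA.eigenvalues_nonneg j) (Finset.mem_univ i)).trans hsum
  rw [← hA.1.cfc_id, hA.1.one_sub_cfc]
  exact hA.1.posSemidef_cfc fun i => sub_nonneg.2 (hle i)

end Matrix

section Choi

variable {R S : Type*} [Fintype R] [DecidableEq R]

lemma LinearMap.eq_sum_single {M : Type*} [AddCommMonoid M] [Module ℂ M]
    (Φ : Matrix R R ℂ →ₗ[ℂ] M) (σ : Matrix R R ℂ) :
    Φ σ = ∑ i, ∑ j, σ i j • Φ (Matrix.single i j 1) := by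
  conv_lhs => rw [matrix_eq_sum_single σ]
  simp only [map_sum, ← map_smul, smul_single, smul_eq_mul, mul_one]

variable [Fintype S]

lemma choiState_sub (Φ Ψ : Matrix R R ℂ →ₗ[ℂ] Matrix S S ℂ) :
    choiState (Φ - Ψ) = choiState Φ - choiState Ψ := by
  ext; simp [choiState, mul_sub]

lemma trace_choiState_mul_kronecker (Φ : Matrix R R ℂ →ₗ[ℂ] Matrix S S ℂ) (σ : Matrix R R ℂ)
    (W : Matrix S S ℂ) :
    (choiState Φ * (σᵀ ⊗ₖ W)).trace = (Fintype.card R : ℂ)⁻¹ * (Φ σ * W).trace := by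
  rw [Φ.eq_sum_single σ]
  simp only [trace, diag_apply, mul_apply, choiState, of_apply, kroneckerMap_apply,
    transpose_apply, Fintype.sum_prod_type, Matrix.sum_apply, Matrix.smul_apply, smul_eq_mul,
    Finset.mul_sum, Finset.sum_mul]
  rw [Finset.sum_comm]
  refine Fintype.sum_congr _ _ fun s => Fintype.sum_congr _ _ fun a => ?_
  refine Fintype.sum_congr _ _ fun b => Fintype.sum_congr _ _ fun t => ?_
  ring

lemma trace_mul_eq_card_mul_trace_choiState (Φ : Matrix R R ℂ →ₗ[ℂ] Matrix S S ℂ)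
    (σ : Matrix R R ℂ) (W : Matrix S S ℂ) :
    (Φ σ * W).trace = Fintype.card R * (choiState Φ * (σᵀ ⊗ₖ W)).trace := by
  rcases isEmpty_or_nonempty R with hR | hR
  · simp [Subsingleton.elim σ 0]
  · rw [trace_choiState_mul_kronecker, ← mul_assoc, mul_inv_cancel₀ (by simp), one_mul]

end Choi

theorem trace_distance_bounded_by_choi_distance_general
    {R S : Type*} [Fintype R] [DecidableEq R] [Fintype S] [DecidableEq S]
    (Φ Ψ : Matrix R R ℂ →ₗ[ℂ] Matrix S S ℂ)
    (hC : (choiState Φ - choiState Ψ).IsHermitian)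
    (hout : ∀ σ : Matrix R R ℂ, σ.PosSemidef → (Φ σ - Ψ σ).IsHermitian) :
    ∀ (σ : Matrix R R ℂ) (hσ : σ.PosSemidef), σ.trace = 1 →
      traceNormH (hout σ hσ) ≤ (Fintype.card R : ℝ) * traceNormH hC := by
  intro σ hσ htr
  set W := (hout σ hσ).cfc (fun x => (SignType.sign x : ℝ))
  have hσ₁ : (1 - σᵀ).PosSemidef := by
    simpa using (hσ.one_sub_of_trace_le_one htr.le).transpose
  have hB₁ : (1 - σᵀ ⊗ₖ W).PosSemidef :=
    posSemidef_one_sub_kronecker hσ.transpose hσ₁ (hout σ hσ).posSemidef_one_sub_cfc_sign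
  have hB₂ : (1 + σᵀ ⊗ₖ W).PosSemidef := by
    simpa [kronecker_neg] using posSemidef_one_sub_kronecker (B := -W) hσ.transpose hσ₁
      (by simpa using (hout σ hσ).posSemidef_one_add_cfc_sign)
  calc traceNormH (hout σ hσ) = ((Φ σ - Ψ σ) * W).trace.re := by
        rw [(hout σ hσ).trace_mul_cfc_sign, traceNormH]; simp
    _ = Fintype.card R * ((choiState Φ - choiState Ψ) * (σᵀ ⊗ₖ W)).trace.re := by
        rw [← LinearMap.sub_apply, trace_mul_eq_card_mul_trace_choiState, choiState_sub,
          ← Complex.ofReal_natCast, Complex.re_ofReal_mul]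
    _ ≤ Fintype.card R * traceNormH hC := by
        gcongr
        exact hC.re_trace_mul_le_sum_abs_eigenvalues hB₁ hB₂

/-- diamond-norm-type bound from Choi state distance: for channels Φ, Ψ
(trace preserving, with positive semidefinite Choi states) and every density matrix σ,
‖Φ(σ) − Ψ(σ)‖₁ ≤ d_R · ‖ρ^Φ − ρ^Ψ‖₁. -/
theorem trace_distance_bounded_by_choi_distance
    {R S : Type*} [Fintype R] [DecidableEq R] [Fintype S] [DecidableEq S]
    (Φ Ψ : Matrix R R ℂ →ₗ[ℂ] Matrix S S ℂ)
    (hΦCP : (choiState Φ).PosSemidef) (hΦTP : ∀ σ, (Φ σ).trace = σ.trace)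
    (hΨCP : (choiState Ψ).PosSemidef) (hΨTP : ∀ σ, (Ψ σ).trace = σ.trace)
    (hC : (choiState Φ - choiState Ψ).IsHermitian)
    (hout : ∀ σ : Matrix R R ℂ, σ.PosSemidef → (Φ σ - Ψ σ).IsHermitian) :
    ∀ (σ : Matrix R R ℂ) (hσ : σ.PosSemidef), σ.trace = 1 →
      traceNormH (hout σ hσ) ≤ (Fintype.card R : ℝ) * traceNormH hC :=
  trace_distance_bounded_by_choi_distance_general Φ Ψ hC hout
end
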